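/- arXiv:1410.6793 — 2 statements merged into one kernel-verified Lean document; each statement's English description precedes it below -/
import Mathlib

section
/- Let G be a finite simple graph and ψ any function on the vertices of G satisfying ψ(u) ≥ k(u) for every vertex u. Let v be a vertex with degree d(v) ≥ 1 and let u_1, u_2, …, u_{d(v)} be the neighbors of v listed so that ψ(u_1) ≤ ψ(u_2) ≤ … ≤ ψ(u_{d(v)}). Then k(v) ≤ max over 1 ≤ i ≤ d(v) of min( ψ(u_i), d(v) − i + 1 ). -/
open SimpleGraph

variable {V : Type*}

/-- The degree of `u` inside the subgraph of `G` induced on the vertex set `S`. -/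
noncomputable def degIn (G : SimpleGraph V) (S : Set V) (u : V) : ℕ :=
  {w ∈ S | G.Adj u w}.ncard

/-- `v` belongs to the `k`-core of `G`: there is a vertex set containing `v` all of whose
vertices have degree at least `k` within the induced subgraph. -/
def inCore (G : SimpleGraph V) (k : ℕ) (v : V) : Prop :=
  ∃ S : Set V, v ∈ S ∧ ∀ u ∈ S, k ≤ degIn G S u

/-- The core number of `v`: the largest `k` such that `v` belongs to the `k`-core of `G`. -/
noncomputable def coreNumber (G : SimpleGraph V) (v : V) : ℕ :=
  sSup {k | inCore G k v}

/-- Degree of a vertex. -/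
noncomputable def deg (G : SimpleGraph V) (v : V) : ℕ :=
  (G.neighborSet v).ncard

/-- The `δ`-neighborhood of `v`: all vertices at shortest-path distance at most `δ` from `v`. -/
def ball (G : SimpleGraph V) (v : V) (δ : ℕ) : Set V :=
  {u | G.Reachable v u ∧ G.dist v u ≤ δ}

/-- The induced estimator `k̆_δ(v)`: the core number of `v` in `G[N_δ(v)]`. -/
noncomputable def kBreve (G : SimpleGraph V) (v : V) (δ : ℕ) : ℕ :=
  coreNumber (G.induce (_root_.ball G v δ)) ⟨v, Reachable.refl v, by rw [SimpleGraph.dist_self]; exact Nat.zero_le _⟩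

/-- Neighborhood of `v` as a `Finset`. -/
noncomputable def nbhd (G : SimpleGraph V) [Finite V] (v : V) : Finset V :=
  (G.neighborSet v).toFinite.toFinset

/-- The propagating estimator `k̂_δ(v)`: `k̂_0(v) = d(v)`, and `k̂_δ(v)` is the max over
`1 ≤ i ≤ d(v)` of `min (k̂_{δ-1}(u_i)) (d(v) - i + 1)`, where `u_1, …, u_{d(v)}` are the
neighbors of `v` listed with `k̂_{δ-1}`-values nondecreasing.  In the formalization the
sorted list `l` of the neighbors' `k̂_{δ-1}`-values is indexed from `0`, so entry `i` of `l`
is `k̂_{δ-1}(u_{i+1})` and `d(v) - i = d(v) - (i+1) + 1`. -/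
noncomputable def kHat (G : SimpleGraph V) [Finite V] : ℕ → V → ℕ
  | 0, v => deg G v
  | δ + 1, v =>
    let l : List ℕ := Multiset.sort ((nbhd G v).val.map (kHat G δ)) (· ≤ ·)
    (Finset.range l.length).sup fun i => min (l.getD i 0) (deg G v - i)

/-! The vertex `v` lies in a `k(v)`-core `S`, so at least `k(v)` of its neighbours lie in `S`,
and each of them has core number, hence `ψ`-value, at least `k(v)`. Since the `ψ (u i)` are
sorted, this forces `ψ (u i) ≥ k(v)` at the index `i = d(v) - k(v)`, whose term in the maximum
is then at least `k(v)`. -/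

open Finset

section CoreNumber

variable (G : SimpleGraph V)

theorem inCore_zero (v : V) : inCore G 0 v :=
  ⟨Set.univ, Set.mem_univ v, fun _ _ => Nat.zero_le _⟩

theorem degIn_le_nat_card [Finite V] (S : Set V) (v : V) : degIn G S v ≤ Nat.card V :=
  (Set.ncard_le_ncard (Set.subset_univ _)).trans_eq (Set.ncard_univ V)

theorem bddAbove_setOf_inCore [Finite V] (v : V) : BddAbove {k | inCore G k v} :=
  ⟨Nat.card V, fun _ ⟨S, hvS, hS⟩ => (hS v hvS).trans (degIn_le_nat_card G S v)⟩

theorem inCore_coreNumber [Finite V] (v : V) : inCore G (coreNumber G v) v :=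
  Nat.sSup_mem ⟨0, inCore_zero G v⟩ (bddAbove_setOf_inCore G v)

theorem le_coreNumber_of_inCore [Finite V] {k : ℕ} {v : V} (h : inCore G k v) :
    k ≤ coreNumber G v :=
  le_csSup (bddAbove_setOf_inCore G v) h

theorem degIn_le_card {ι : Type*} (u : ι → V) (S : Set V) (v : V) (A : Finset ι)
    (hA : ∀ w ∈ S, G.Adj v w → ∃ i ∈ A, u i = w) : degIn G S v ≤ #A :=
  calc degIn G S v ≤ (u '' A).ncard :=
        Set.ncard_le_ncard (fun w ⟨hwS, hvw⟩ => hA w hwS hvw) (A.finite_toSet.image u)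
    _ ≤ #A := (Set.ncard_image_le A.finite_toSet).trans_eq (Set.ncard_coe_finset A)

end CoreNumber

/-- The witness is the index `n - k`: otherwise all `k` large entries lie strictly above it. -/
theorem le_sup_min_sub_of_le_card {n k : ℕ} {f : Fin n → ℕ} (hf : Monotone f)
    {A : Finset (Fin n)} (hkA : k ≤ #A) (hAf : ∀ i ∈ A, k ≤ f i) :
    k ≤ univ.sup fun i => min (f i) (n - i) := by
  rcases Nat.eq_zero_or_pos k with rfl | hk
  · exact Nat.zero_le _
  have hkn : k ≤ n := hkA.trans (card_le_univ A |>.trans_eq (Fintype.card_fin n))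
  let i₀ : Fin n := ⟨n - k, by omega⟩
  have hfi₀ : k ≤ f i₀ := by
    by_contra! hlt
    have hA : A ⊆ Ioi i₀ := fun i hi =>
      mem_Ioi.2 (lt_of_not_ge fun hle => ((hAf i hi).trans (hf hle)).not_gt hlt)
    have := (card_le_card hA).trans_eq (Fin.card_Ioi i₀)
    simp only [i₀] at this
    omega
  calc k ≤ min (f i₀) (n - i₀) := le_min hfi₀ (by simp only [i₀]; omega)
    _ ≤ _ := le_sup (f := fun i => min (f i) (n - i)) (mem_univ i₀)

theorem stmt7_general {V : Type*} [Fintype V] (G : SimpleGraph V) (ψ : V → ℕ)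
    (hψ : ∀ w, coreNumber G w ≤ ψ w) (v : V)
    (u : Fin (deg G v) → V)
    (hsurj : ∀ w, G.Adj v w → ∃ i, u i = w)
    (hmono : Monotone fun i => ψ (u i)) :
    coreNumber G v ≤
      Finset.univ.sup fun i : Fin (deg G v) => min (ψ (u i)) (deg G v - (i : ℕ)) := by
  classical
  obtain ⟨S, hvS, hS⟩ := inCore_coreNumber G v
  let A := univ.filter fun i => u i ∈ S
  have hcard : coreNumber G v ≤ #A := (hS v hvS).trans <| degIn_le_card G u S v A
    fun w hwS hvw => by
      obtain ⟨i, rfl⟩ := hsurj w hvw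
      exact ⟨i, mem_filter.2 ⟨mem_univ i, hwS⟩, rfl⟩
  refine le_sup_min_sub_of_le_card hmono hcard fun i hi => ?_
  exact (le_coreNumber_of_inCore G ⟨S, (mem_filter.1 hi).2, hS⟩).trans (hψ (u i))

/-- if `ψ` is an upper bound on core numbers and `u` enumerates the neighbors
of `v` (degree `d(v) ≥ 1`) with nondecreasing `ψ`-values, then
`k(v) ≤ max_{1 ≤ i ≤ d(v)} min (ψ(u_i)) (d(v) - i + 1)` (with `0`-indexed `i : Fin (d(v))`,
term `i` is `min (ψ(u i)) (d(v) - i)`). -/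
theorem stmt7 {V : Type*} [Fintype V] (G : SimpleGraph V) (ψ : V → ℕ)
    (hψ : ∀ w, coreNumber G w ≤ ψ w) (v : V) (hd : 1 ≤ deg G v)
    (u : Fin (deg G v) → V)
    (hinj : Function.Injective u)
    (hadj : ∀ i, G.Adj v (u i))
    (hsurj : ∀ w, G.Adj v w → ∃ i, u i = w)
    (hmono : Monotone fun i => ψ (u i)) :
    coreNumber G v ≤
      Finset.univ.sup fun i : Fin (deg G v) => min (ψ (u i)) (deg G v - (i : ℕ)) :=
  stmt7_general G ψ hψ v u hsurj hmono
end

section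
/- Let j ≥ 2 and ℓ ≥ 2 be integers and let T'_{j,ℓ} be the graph obtained from the complete j-ary tree T_{j,ℓ} by adding j new vertices w_1, …, w_j, each joined by an edge to every leaf of T_{j,ℓ}. Then the root v of T_{j,ℓ} has core number k(v) = j in T'_{j,ℓ}, and for every integer δ with 1 ≤ δ ≤ ℓ − 1 the induced estimator satisfies k̆_δ(v) = 1; consequently k(v) − k̆_δ(v) = j − 1 whenever ℓ ≥ δ + 1. -/
open SimpleGraph

variable {V : Type*}

/-- The complete `j`-ary tree with `ℓ` levels.  A vertex at level `i` (for `1 ≤ i ≤ ℓ`) is a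
list of length `i - 1` over `Fin j` recording the path of child-choices from the root `[]`;
two vertices are adjacent iff one is obtained from the other by prepending one child-choice. -/
def Tjl (j ℓ : ℕ) : SimpleGraph {l : List (Fin j) // l.length < ℓ} where
  Adj x y := (∃ c : Fin j, (y : List (Fin j)) = c :: (x : List (Fin j)))
    ∨ (∃ c : Fin j, (x : List (Fin j)) = c :: (y : List (Fin j)))
  symm := ⟨fun _ _ h => Or.symm h⟩
  loopless := by
    refine ⟨?_⟩
    rintro x (⟨c, hc⟩ | ⟨c, hc⟩) <;>
      · have := congrArg List.length hc
        simp at this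

instance (j ℓ : ℕ) : Finite {l : List (Fin j) // l.length < ℓ} :=
  (List.finite_length_lt (Fin j) ℓ).to_subtype

/-- The root of `Tjl j ℓ`. -/
def root (j ℓ : ℕ) (h : 0 < ℓ) : {l : List (Fin j) // l.length < ℓ} :=
  ⟨[], by simpa using h⟩

/-- `T'_{j,ℓ}`: the complete `j`-ary tree with `ℓ` levels together with `j` extra vertices
`w_1, …, w_j` (the `Sum.inr` vertices), each adjacent to every leaf (level-`ℓ` vertex) of the
tree. -/
def Tjl' (j ℓ : ℕ) : SimpleGraph ({l : List (Fin j) // l.length < ℓ} ⊕ Fin j) where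
  Adj x y :=
    match x, y with
    | Sum.inl a, Sum.inl b => (Tjl j ℓ).Adj a b
    | Sum.inl a, Sum.inr _ => a.val.length = ℓ - 1
    | Sum.inr _, Sum.inl b => b.val.length = ℓ - 1
    | Sum.inr _, Sum.inr _ => False
  symm := by
    refine ⟨?_⟩
    rintro (a | a) (b | b) h
    · exact (Tjl j ℓ).adj_symm h
    · exact h
    · exact h
    · exact h
  loopless := by
    refine ⟨?_⟩
    rintro (a | a) h
    · exact (Tjl j ℓ).loopless.irrefl a h
    · exact h

/-!
Every vertex of `T'_{j,ℓ}` has degree at least `j`, so the whole graph is a `j`-core, while the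
root has degree `j`; hence `k(v) = j`. A ball of radius `δ < ℓ` around the root misses the extra
vertices, which sit at distance `ℓ`, so it induces a subtree. In any finite set of tree vertices,
one of maximal depth has only its parent as a neighbour in the set, so no `2`-core exists there,
while the root and one of its children form a `1`-core.
-/

section Core

variable {G : SimpleGraph V} {k m : ℕ} {v w : V}

lemma inCore.mono (h : inCore G k v) (hmk : m ≤ k) : inCore G m v :=
  let ⟨S, hvS, hS⟩ := h
  ⟨S, hvS, fun u hu => hmk.trans (hS u hu)⟩

lemma degIn_univ (u : V) : degIn G Set.univ u = deg G u := by
  simp [degIn, deg, SimpleGraph.neighborSet]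

lemma inCore_of_forall_le_deg (h : ∀ u, k ≤ deg G u) : inCore G k v :=
  ⟨Set.univ, trivial, fun u _ => (degIn_univ u).symm ▸ h u⟩

lemma inCore.le_deg [Finite V] (h : inCore G k v) : k ≤ deg G v := by
  obtain ⟨S, hvS, hS⟩ := h
  exact (hS v hvS).trans (Set.ncard_le_ncard fun _ hw => hw.2)

lemma le_deg_of_injective [Finite V] {n : ℕ} (f : Fin n → V) (hf : Function.Injective f)
    (hadj : ∀ c, G.Adj v (f c)) : n ≤ deg G v := by
  have := Set.ncard_le_ncard_of_injOn f (s := Set.univ) (t := G.neighborSet v)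
    (fun c _ => hadj c) hf.injOn
  rwa [Set.ncard_univ, Nat.card_fin] at this

lemma deg_le_of_neighborSet_subset_range [Finite V] {n : ℕ} (f : Fin n → V)
    (h : G.neighborSet v ⊆ Set.range f) : deg G v ≤ n := by
  rw [← Set.image_univ] at h
  simpa [deg] using (Set.ncard_le_ncard h).trans (Set.ncard_image_le (Set.toFinite Set.univ))

lemma inCore_one_of_adj [Finite V] (h : G.Adj v w) : inCore G 1 v := by
  refine ⟨{v, w}, Or.inl rfl, ?_⟩
  rintro u (rfl | rfl)
  · exact (Set.ncard_pos).mpr ⟨w, Or.inr rfl, h⟩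
  · exact (Set.ncard_pos).mpr ⟨v, Or.inl rfl, h.symm⟩

/-- A vertex of maximal `f`-value in a would-be `2`-core has at most one neighbour in it. -/
lemma not_inCore_two [Finite V] (f : V → ℕ)
    (hf : ∀ u, {w | G.Adj u w ∧ f w ≤ f u}.Subsingleton) : ¬ inCore G 2 v := by
  rintro ⟨S, hvS, hS⟩
  obtain ⟨x, hxS, hxmax⟩ := S.exists_max_image f S.toFinite ⟨v, hvS⟩
  have hdeg : degIn G S x ≤ 1 :=
    Set.ncard_le_one_iff_subsingleton.mpr
      ((hf x).anti fun w hw => ⟨hw.2, hxmax w hw.1⟩)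
  exact absurd (hS x hxS) (by omega)

lemma coreNumber_eq_of_inCore_of_not_inCore (hk : inCore G k v) (hk' : ¬ inCore G (k + 1) v) :
    coreNumber G v = k := by
  refine IsGreatest.csSup_eq ⟨hk, fun m hm => ?_⟩
  by_contra! hkm
  exact hk' (inCore.mono hm hkm)

end Core

lemma le_add_dist_of_forall_adj {G : SimpleGraph V} (f : V → ℕ)
    (hf : ∀ x y, G.Adj x y → f y ≤ f x + 1) {x y : V} (h : G.Reachable x y) :
    f y ≤ f x + G.dist x y := by
  obtain ⟨p, hp⟩ := h.exists_walk_length_eq_dist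
  rw [← hp]
  clear hp h
  induction p with
  | nil => simp
  | cons hadj _ ih =>
    have := hf _ _ hadj
    simp only [SimpleGraph.Walk.length_cons]
    omega

lemma Tjl.eq_tail_of_adj {j ℓ : ℕ} {a b : {l : List (Fin j) // l.length < ℓ}}
    (h : (Tjl j ℓ).Adj a b) (hba : b.1.length ≤ a.1.length) : b.1 = a.1.tail := by
  rcases h with ⟨c, hc⟩ | ⟨c, hc⟩
  · have := congrArg List.length hc
    simp only [List.length_cons] at this
    omega
  · simp [hc]

namespace Tjl'

variable {j ℓ : ℕ}

/-- The level minus one on tree vertices; the extra vertices are put one level below the leaves. -/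
def depth : {l : List (Fin j) // l.length < ℓ} ⊕ Fin j → ℕ
  | Sum.inl a => a.1.length
  | Sum.inr _ => ℓ

lemma depth_le_of_adj {x y : {l : List (Fin j) // l.length < ℓ} ⊕ Fin j}
    (h : (Tjl' j ℓ).Adj x y) : depth y ≤ depth x + 1 := by
  rcases x with a | _ <;> rcases y with b | _
  · rcases h with ⟨c, hc⟩ | ⟨c, hc⟩
    · simp [depth, hc]
    · have := congrArg List.length hc
      simp only [List.length_cons] at this
      simp only [depth]
      omega
  · have : a.1.length = ℓ - 1 := h
    have := a.2
    simp only [depth]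
    omega
  · have := b.2
    simp only [depth]
    omega
  · exact h.elim

lemma ball_root_subset_range_inl {δ : ℕ} (hδ : δ < ℓ) :
    _root_.ball (Tjl' j ℓ) (Sum.inl (root j ℓ (by omega))) δ ⊆ Set.range Sum.inl := by
  rintro (a | _) ⟨hr, hd⟩
  · exact ⟨a, rfl⟩
  · have h := le_add_dist_of_forall_adj depth (fun _ _ => depth_le_of_adj) hr
    change ℓ ≤ 0 + _ at h
    omega

lemma le_deg (hℓ : 2 ≤ ℓ) (u : {l : List (Fin j) // l.length < ℓ} ⊕ Fin j) :
    j ≤ deg (Tjl' j ℓ) u := by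
  rcases u with a | _
  · by_cases hleaf : a.1.length + 1 < ℓ
    · refine le_deg_of_injective (fun c => Sum.inl ⟨c :: a.1, by simpa using hleaf⟩)
        (fun _ _ h => (List.cons.inj (congrArg Subtype.val (Sum.inl_injective h))).1)
        (fun c => Or.inl ⟨c, rfl⟩)
    · refine le_deg_of_injective Sum.inr Sum.inr_injective (fun _ => ?_)
      show a.1.length = ℓ - 1
      have := a.2
      omega
  · refine le_deg_of_injective
      (fun c => Sum.inl ⟨c :: List.replicate (ℓ - 2) c, by simp; omega⟩)
      (fun _ _ h => (List.cons.inj (congrArg Subtype.val (Sum.inl_injective h))).1) (fun _ => ?_)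
    show (_ :: _).length = ℓ - 1
    simp only [List.length_cons, List.length_replicate]
    omega

lemma deg_root_le (hℓ : 2 ≤ ℓ) :
    deg (Tjl' j ℓ) (Sum.inl (root j ℓ (by omega))) ≤ j := by
  refine deg_le_of_neighborSet_subset_range (fun c => Sum.inl ⟨[c], by simp; omega⟩) ?_
  rintro (b | _) hb
  · rcases hb with ⟨c, hc⟩ | ⟨c, hc⟩
    · exact ⟨c, congrArg Sum.inl (Subtype.ext hc.symm)⟩
    · simp [root] at hc
  · have : ([] : List (Fin j)).length = ℓ - 1 := hb
    simp only [List.length_nil] at this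
    omega

lemma coreNumber_root (hℓ : 2 ≤ ℓ) :
    coreNumber (Tjl' j ℓ) (Sum.inl (root j ℓ (by omega))) = j :=
  coreNumber_eq_of_inCore_of_not_inCore (inCore_of_forall_le_deg (le_deg hℓ)) fun h =>
    absurd (h.le_deg.trans (deg_root_le hℓ)) (by omega)

lemma not_inCore_two_induce_ball_root {δ : ℕ} (hδ : δ < ℓ) {u} :
    ¬ inCore ((Tjl' j ℓ).induce
      (_root_.ball (Tjl' j ℓ) (Sum.inl (root j ℓ (Nat.zero_lt_of_lt hδ))) δ)) 2 u := by
  refine not_inCore_two (depth ∘ Subtype.val) ?_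
  rintro ⟨_, hxB⟩ ⟨_, hw₁B⟩ ⟨hadj₁, hle₁⟩ ⟨_, hw₂B⟩ ⟨hadj₂, hle₂⟩
  obtain ⟨a, rfl⟩ := ball_root_subset_range_inl hδ hxB
  obtain ⟨b₁, rfl⟩ := ball_root_subset_range_inl hδ hw₁B
  obtain ⟨b₂, rfl⟩ := ball_root_subset_range_inl hδ hw₂B
  have hb : b₁.1 = b₂.1 :=
    (Tjl.eq_tail_of_adj hadj₁ hle₁).trans (Tjl.eq_tail_of_adj hadj₂ hle₂).symm
  exact Subtype.ext (congrArg Sum.inl (Subtype.ext hb))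

lemma kBreve_root (hj : 1 ≤ j) {δ : ℕ} (hδ₁ : 1 ≤ δ) (hδ : δ < ℓ) :
    kBreve (Tjl' j ℓ) (Sum.inl (root j ℓ (by omega))) δ = 1 := by
  set child : {l : List (Fin j) // l.length < ℓ} ⊕ Fin j :=
    Sum.inl ⟨[⟨0, hj⟩], by simp; omega⟩
  have hadj : (Tjl' j ℓ).Adj (Sum.inl (root j ℓ (by omega))) child := Or.inl ⟨_, rfl⟩
  have hchild : child ∈ _root_.ball (Tjl' j ℓ) (Sum.inl (root j ℓ (by omega))) δ :=
    ⟨hadj.reachable, (SimpleGraph.dist_le hadj.toWalk).trans hδ₁⟩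
  exact coreNumber_eq_of_inCore_of_not_inCore (inCore_one_of_adj (w := ⟨child, hchild⟩) hadj)
    (not_inCore_two_induce_ball_root hδ)

end Tjl'

/-- in `T'_{j,ℓ}` (`j, ℓ ≥ 2`) the root `v` of the underlying tree has core
number `j`, and for every `1 ≤ δ ≤ ℓ - 1` the induced estimator satisfies `k̆_δ(v) = 1`;
consequently `k(v) - k̆_δ(v) = j - 1` whenever `ℓ ≥ δ + 1`. -/
theorem stmt14 (j ℓ : ℕ) (hj : 2 ≤ j) (hℓ : 2 ≤ ℓ) :
    coreNumber (Tjl' j ℓ) (Sum.inl (root j ℓ (by omega))) = j ∧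
    ∀ δ : ℕ, 1 ≤ δ → δ ≤ ℓ - 1 →
      kBreve (Tjl' j ℓ) (Sum.inl (root j ℓ (by omega))) δ = 1 ∧
      coreNumber (Tjl' j ℓ) (Sum.inl (root j ℓ (by omega))) -
        kBreve (Tjl' j ℓ) (Sum.inl (root j ℓ (by omega))) δ = j - 1 := by
  have hcore := Tjl'.coreNumber_root (j := j) hℓ
  refine ⟨hcore, fun δ hδ₁ hδ => ?_⟩
  have hbreve := Tjl'.kBreve_root (j := j) (by omega) hδ₁ (by omega : δ < ℓ)
  exact ⟨hbreve, by rw [hcore, hbreve]⟩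
end
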